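/- For any star S and any tree T on n vertices, gm(S □ T) ≤ gm(S ⊠ T) ≤ gm(S · T) < √(3n+1) + 1, where □, ⊠, · denote the Cartesian, strong and lexicographic products respectively. -/

import Mathlib

open SimpleGraph

/-- `G` is a minor of `H`: there is a model of `G` in `H`, i.e. a family of pairwise
disjoint branch sets, each inducing a connected subgraph of `H`, with an edge of `H`
between the branch sets of any two adjacent vertices of `G`. -/
def SimpleGraph.IsMinorOf {α : Type*} {β : Type*} (G : SimpleGraph α) (H : SimpleGraph β) :
    Prop :=
  ∃ B : α → Set β,
    (∀ x, (H.induce (B x)).Connected) ∧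
    (Pairwise fun x y => Disjoint (B x) (B y)) ∧
    (∀ ⦃x y⦄, G.Adj x y → ∃ a ∈ B x, ∃ b ∈ B y, H.Adj a b)

/-- The strong product of two simple graphs. -/
def strongProd {α β : Type*} (G : SimpleGraph α) (H : SimpleGraph β) :
    SimpleGraph (α × β) where
  Adj a b := (a.1 = b.1 ∧ H.Adj a.2 b.2) ∨ (a.2 = b.2 ∧ G.Adj a.1 b.1) ∨
             (G.Adj a.1 b.1 ∧ H.Adj a.2 b.2)
  symm := by
    constructor
    rintro a b (⟨h1, h2⟩ | ⟨h1, h2⟩ | ⟨h1, h2⟩)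
    · exact Or.inl ⟨h1.symm, h2.symm⟩
    · exact Or.inr (Or.inl ⟨h1.symm, h2.symm⟩)
    · exact Or.inr (Or.inr ⟨h1.symm, h2.symm⟩)
  loopless := by
    constructor
    rintro a (⟨_, h⟩ | ⟨_, h⟩ | ⟨h, _⟩)
    · exact H.irrefl h
    · exact G.irrefl h
    · exact G.irrefl h

/-- The lexicographic product of two simple graphs. -/
def lexProd {α β : Type*} (G : SimpleGraph α) (H : SimpleGraph β) :
    SimpleGraph (α × β) where
  Adj a b := G.Adj a.1 b.1 ∨ (a.1 = b.1 ∧ H.Adj a.2 b.2)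
  symm := by
    constructor
    rintro a b (h | ⟨h1, h2⟩)
    · exact Or.inl h.symm
    · exact Or.inr ⟨h1.symm, h2.symm⟩
  loopless := by
    constructor
    rintro a (h | ⟨_, h⟩)
    · exact G.irrefl h
    · exact H.irrefl h

/-- The `k × k` grid graph: vertices `{0,…,k-1}²`, two vertices adjacent iff they differ
by exactly one in exactly one coordinate. -/
def gridGraph (k : ℕ) : SimpleGraph (Fin k × Fin k) :=
  SimpleGraph.fromRel (fun a b =>
    (a.1 = b.1 ∧ a.2.val + 1 = b.2.val) ∨ (a.2 = b.2 ∧ a.1.val + 1 = b.1.val))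

/-- The star with `n` leaves: the root `none` is adjacent to each leaf `some i`. -/
def starGraph (n : ℕ) : SimpleGraph (Option (Fin n)) :=
  SimpleGraph.fromRel (fun a b => a = none ∧ b ≠ none)

/-- The subdivided star `S_{ℓ,p}`: a star with `ℓ` leaves, each edge subdivided `p-1`
times, i.e. a centre `none` with `ℓ` pendant paths `some (i, 0), …, some (i, p-1)`. -/
def subStar (ℓ p : ℕ) : SimpleGraph (Option (Fin ℓ × Fin p)) :=
  SimpleGraph.fromRel (fun a b =>
    (a = none ∧ ∃ (i : Fin ℓ) (j : Fin p), j.val = 0 ∧ b = some (i, j)) ∨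
    (∃ (i : Fin ℓ) (j k : Fin p), a = some (i, j) ∧ b = some (i, k) ∧ j.val + 1 = k.val))

/-- `G` admits a tree-decomposition of width at most `w`: there is a tree `T` (indexed by
`ℕ`) and bags such that every vertex and every edge of `G` lies in some bag, for every
vertex of `G` the set of nodes whose bag contains it induces a non-empty connected
subtree of `T`, and every bag has at most `w + 1` vertices. -/
def HasDecompWidth {V : Type*} (G : SimpleGraph V) (w : ℕ) : Prop :=
  ∃ (T : SimpleGraph ℕ) (bag : ℕ → Finset V),
    T.IsTree ∧
    (∀ v : V, ∃ i, v ∈ bag i) ∧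
    (∀ u v : V, G.Adj u v → ∃ i, u ∈ bag i ∧ v ∈ bag i) ∧
    (∀ v : V, (T.induce {i | v ∈ bag i}).Connected) ∧
    (∀ i, (bag i).card ≤ w + 1)

/-- The treewidth of a finite graph: the minimum width of a tree-decomposition. -/
noncomputable def treewidth {V : Type*} [Fintype V] (G : SimpleGraph V) : ℕ :=
  sInf { w | HasDecompWidth G w }

/-- `gm G`: the maximum `k` such that the `k × k` grid is a minor of `G`. -/
noncomputable def gridMinorNum {V : Type*} (G : SimpleGraph V) : ℕ :=
  sSup { k | (gridGraph k).IsMinorOf G }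

/-- A walk in a tree rooted at `r` is vertical if it contains at most one vertex of
each depth (distance from the root). -/
def IsVertical {V : Type*} (T : SimpleGraph V) (r : V) {u w : V} (p : T.Walk u w) : Prop :=
  ∀ x ∈ p.support, ∀ y ∈ p.support, T.dist r x = T.dist r y → x = y

/-- In the tree `T` rooted at `r`, `v` is an ancestor of `w`: `v` lies on the unique
path from `r` to `w` (in a tree this is equivalent to this distance identity). -/
def Ancestor {V : Type*} (T : SimpleGraph V) (r v w : V) : Prop :=
  T.dist r w = T.dist r v + T.dist v w

/-- Two vertices of a rooted tree are related if one is an ancestor of the other. -/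
def Related {V : Type*} (T : SimpleGraph V) (r v w : V) : Prop :=
  Ancestor T r v w ∨ Ancestor T r w v

/-- The height of `v` in the tree `T` rooted at `r`: the maximum order (number of
vertices) of a vertical path whose upper (minimum-depth) endpoint is `v`. -/
noncomputable def height {V : Type*} (T : SimpleGraph V) (r v : V) : ℕ :=
  sSup { n | ∃ (w : V) (p : T.Walk v w), p.IsPath ∧ IsVertical T r p ∧
      (∀ x ∈ p.support, T.dist r v ≤ T.dist r x) ∧ p.support.length = n }

/-- The radius of a finite graph: the least `e` such that some vertex is within
distance `e` of every vertex. -/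
noncomputable def graphRadius {V : Type*} [Fintype V] (T : SimpleGraph V) : ℕ :=
  sInf { e | ∃ v, ∀ w, T.dist v w ≤ e }


/-!
Since `S □ T ≤ S ⊠ T ≤ S · T` on the same vertex set, only the bound for `S · T` needs work.
Take a model of the `k × k` grid in `S · T`. At most `n` branch sets meet the copy of `T` over the
centre of `S`. Every other branch set avoids the centre, so, leaves being pairwise non-adjacent,
it lies in a single copy `{ℓ} × T` over a leaf and projects to a subtree of `T`; adjacent grid
vertices of this kind lie over the same leaf. Contracting disjoint subtrees of a tree leaves a
forest, so the grid edges among the `r` vertices over one leaf number fewer than `r`. Of the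
`2k(k-1)` grid edges at most four meet each of the `s ≤ n` vertices of the first kind, whence
`2k(k-1) ≤ 4s + (k² - s) - 1`, that is `(k-1)² ≤ 3s ≤ 3n`.
-/

open Finset

lemma card_add_one_le_of_forall_parent {ι : Type*} {A : Finset ι} {P : Finset (ι × ι)}
    (R : ι → ι → Prop) (hR : ∀ i j j', R i j → R i j' → j = j') {i₀ : ι} (hi₀ : i₀ ∈ A)
    (hroot : ∀ j, ¬R i₀ j) (hswap : ∀ p ∈ P, p.swap ∉ P)
    (hP : ∀ p ∈ P, ∃ i ∈ A, ∃ j, R i j ∧ (p = (i, j) ∨ p = (j, i))) :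
    #P + 1 ≤ #A := by
  classical
  have : Nonempty ι := ⟨i₀⟩
  choose! child hchild parent hparent hp_eq using hP
  have hmaps : ∀ p ∈ P, child p ∈ A.erase i₀ := fun p hp =>
    mem_erase.2 ⟨fun h => hroot _ (h ▸ hparent p hp), hchild p hp⟩
  have hinj : Set.InjOn child (P : Set (ι × ι)) := by
    intro p hp q hq hpq
    have hpar := hR _ _ _ (hparent p hp) (hpq ▸ hparent q hq)
    have : p = q ∨ p = q.swap := by
      rcases hp_eq p hp with h₁ | h₁ <;> rcases hp_eq q hq with h₂ | h₂ <;>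
        rw [h₁, h₂, hpq, hpar] <;> simp
    refine this.resolve_right fun h => hswap p hp ?_
    rwa [h, Prod.swap_swap]
  have := card_le_card_of_injOn child hmaps hinj
  rw [card_erase_of_mem hi₀] at this
  have := card_pos.2 ⟨i₀, hi₀⟩
  omega

lemma card_filter_exists_mem_le {ι X β : Type*} [Fintype ι] [Fintype β] {B : ι → Set X}
    (hdisj : Pairwise fun i j => Disjoint (B i) (B j)) (g : β → X)
    [DecidablePred fun i => ∃ t, g t ∈ B i] :
    #{i | ∃ t, g t ∈ B i} ≤ Fintype.card β := by
  rcases isEmpty_or_nonempty β with hβ | hβ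
  · simp
  have hex : ∀ i ∈ ({i | ∃ t, g t ∈ B i} : Finset ι), ∃ t, g t ∈ B i :=
    fun i hi => (mem_filter.1 hi).2
  choose! t ht using hex
  have hinj : Set.InjOn t ↑({i | ∃ t, g t ∈ B i} : Finset ι) := fun i hi j hj hij => by
    by_contra hne
    exact Set.disjoint_left.1 (hdisj hne) (ht i hi) (hij ▸ ht j hj)
  simpa using card_le_card_of_injOn t (fun i _ => mem_univ (t i)) hinj

namespace SimpleGraph

variable {V : Type*} {G : SimpleGraph V}

lemma Reachable.apply_eq_of_forall_adj {β : Type*} {f : V → β}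
    (hf : ∀ ⦃u v⦄, G.Adj u v → f u = f v) {u v : V} (h : G.Reachable u v) : f u = f v := by
  obtain ⟨p⟩ := h
  induction p with
  | nil => rfl
  | cons ha _ ih => exact (hf ha).trans ih

lemma Reachable.exists_isPath_of_induce {s : Set V} {x y : s} (h : (G.induce s).Reachable x y) :
    ∃ p : G.Walk x y, p.IsPath ∧ ∀ z ∈ p.support, z ∈ s := by
  classical
  obtain ⟨w⟩ := h
  let q := w.map (Embedding.induce s).toHom
  refine ⟨q.bypass, q.bypass_isPath, fun z hz => ?_⟩
  have hz' := q.support_bypass_subset_support hz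
  rw [Walk.support_map] at hz'
  obtain ⟨z', -, rfl⟩ := List.mem_map.1 hz'
  exact z'.2

namespace IsTree

lemma eq_of_adj_of_dist_add_one (hG : G.IsTree) (r : V) {x y₁ y₂ : V} (h₁ : G.Adj y₁ x)
    (h₂ : G.Adj y₂ x) (hd₁ : G.dist r y₁ + 1 = G.dist r x) (hd₂ : G.dist r y₂ + 1 = G.dist r x) :
    y₁ = y₂ := by
  obtain ⟨p₁, hp₁⟩ := (hG.connected r y₁).exists_walk_length_eq_dist
  obtain ⟨p₂, hp₂⟩ := (hG.connected r y₂).exists_walk_length_eq_dist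
  have hpath₁ := (p₁.concat h₁).isPath_of_length_eq_dist (by simp [hp₁, hd₁])
  have hpath₂ := (p₂.concat h₂).isPath_of_length_eq_dist (by simp [hp₂, hd₂])
  simpa [Walk.penultimate_concat] using
    congrArg Walk.penultimate ((hG.existsUnique_path r x).unique hpath₁ hpath₂)

lemma dist_eq_add_length_of_isPath (hG : G.IsTree) (r : V) {a x : V} (p : G.Walk a x)
    (hp : p.IsPath) (hdown : ∀ b ∈ p.support, G.Adj a b → G.dist r b + 1 ≠ G.dist r a) :
    G.dist r x = G.dist r a + p.length := by
  induction p with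
  | nil => simp
  | @cons a y x h q ih =>
    rw [Walk.cons_isPath_iff] at hp
    have hy : G.dist r y = G.dist r a + 1 := by
      have := hG.dist_eq_dist_add_one_of_adj r h
      have := hdown y (by simp) h
      omega
    have hq : G.dist r x = G.dist r y + q.length := by
      refine ih hp.1 fun b hb hyb hdb => hp.2 ?_
      exact hG.eq_of_adj_of_dist_add_one r hyb.symm h (by omega) (by omega) ▸ hb
    rw [hq, hy, Walk.length_cons]
    ring

lemma eq_of_dist_le_of_preconnected_induce (hG : G.IsTree) (r : V) {s : Set V}
    (hs : (G.induce s).Preconnected) {a b x : V} (ha : a ∈ s) (hb : b ∉ s) (hab : G.Adj a b)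
    (hd : G.dist r b + 1 = G.dist r a) (hx : x ∈ s) (hxa : G.dist r x ≤ G.dist r a) :
    x = a := by
  obtain ⟨p, hp, hps⟩ := (hs ⟨a, ha⟩ ⟨x, hx⟩).exists_isPath_of_induce
  have hlen : G.dist r x = G.dist r a + p.length :=
    hG.dist_eq_add_length_of_isPath r p hp fun c hc hac hdc =>
      hb (hG.eq_of_adj_of_dist_add_one r hac.symm hab.symm hdc hd ▸ hps c hc)
  exact (Walk.eq_of_length_eq_zero (p := p) (by omega)).symm

theorem card_add_one_le_of_pairwiseDisjoint {ι : Type*} (hG : G.IsTree) {A : Finset ι}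
    (hA : A.Nonempty) {C : ι → Set V} (hdisj : (A : Set ι).PairwiseDisjoint C)
    (hconn : ∀ i ∈ A, (G.induce (C i)).Connected) {P : Finset (ι × ι)}
    (hPA : ∀ p ∈ P, p.1 ∈ A ∧ p.2 ∈ A) (hswap : ∀ p ∈ P, p.swap ∉ P)
    (hP : ∀ p ∈ P, ∃ a ∈ C p.1, ∃ b ∈ C p.2, G.Adj a b) :
    #P + 1 ≤ #A := by
  obtain ⟨r⟩ := hG.connected.nonempty
  have : Nonempty V := ⟨r⟩
  have htop_ex (i : ι) (hi : i ∈ A) : ∃ a ∈ C i, ∀ x ∈ C i, G.dist r a ≤ G.dist r x := by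
    obtain ⟨⟨x, hx⟩⟩ := (hconn i hi).nonempty
    exact ⟨_, Function.argminOn_mem _ _ ⟨x, hx⟩, fun _ hx => Function.argminOn_le (G.dist r) _ hx⟩
  choose! top htop htop_le using htop_ex
  have eq_top (i : ι) (hi : i ∈ A) {a b : V} (ha : a ∈ C i) (hb : b ∉ C i) (hab : G.Adj a b)
      (hd : G.dist r b + 1 = G.dist r a) : a = top i :=
    (hG.eq_of_dist_le_of_preconnected_induce r (hconn i hi).preconnected ha hb hab hd
      (htop i hi) (htop_le i hi a ha)).symm
  -- Every edge of `P` joins the top of one set to its parent, which lies in the other set.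
  let IsParent (i j : ι) : Prop :=
    j ∈ A ∧ ∃ b ∈ C j, G.Adj (top i) b ∧ G.dist r b + 1 = G.dist r (top i)
  obtain ⟨i₀, hi₀, hi₀_min⟩ := A.exists_min_image (fun i => G.dist r (top i)) hA
  refine card_add_one_le_of_forall_parent IsParent (fun i j j' h h' => ?_) hi₀
    (fun j ⟨hj, b, hb, _, hdb⟩ => ?_) hswap fun p hp => ?_
  · obtain ⟨hj, b, hb, hab, hdb⟩ := h
    obtain ⟨hj', b', hb', hab', hdb'⟩ := h'
    obtain rfl := hG.eq_of_adj_of_dist_add_one r hab.symm hab'.symm hdb hdb'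
    exact hdisj.elim_set hj hj' b hb hb'
  · have := htop_le _ hj b hb
    have := hi₀_min _ hj
    omega
  obtain ⟨i, j⟩ := p
  obtain ⟨hi, hj⟩ : i ∈ A ∧ j ∈ A := hPA _ hp
  obtain ⟨a, ha, b, hb, hab⟩ : ∃ a ∈ C i, ∃ b ∈ C j, G.Adj a b := hP _ hp
  have hdisj_ij := hdisj hi hj fun h : i = j => hswap _ hp (by subst h; exact hp)
  rcases hG.dist_eq_dist_add_one_of_adj r hab with hd | hd
  · refine ⟨i, hi, j, ⟨hj, b, hb, ?_⟩, Or.inl rfl⟩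
    rw [← eq_top i hi ha (Set.disjoint_right.1 hdisj_ij hb) hab hd.symm]
    exact ⟨hab, hd.symm⟩
  · refine ⟨j, hj, i, ⟨hi, a, ha, ?_⟩, Or.inr rfl⟩
    rw [← eq_top j hj hb (Set.disjoint_left.1 hdisj_ij ha) hab.symm hd.symm]
    exact ⟨hab.symm, hd.symm⟩

end IsTree

end SimpleGraph

section Products

variable {α β : Type*}

lemma SimpleGraph.IsMinorOf.mono {G : SimpleGraph α} {H H' : SimpleGraph β}
    (h : G.IsMinorOf H) (hle : H ≤ H') : G.IsMinorOf H' := by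
  obtain ⟨B, hconn, hdisj, hadj⟩ := h
  refine ⟨B, fun x => (hconn x).mono fun _ _ h => hle h, hdisj, fun x y hxy => ?_⟩
  obtain ⟨a, ha, b, hb, hab⟩ := hadj hxy
  exact ⟨a, ha, b, hb, hle hab⟩

lemma boxProd_le_strongProd (G : SimpleGraph α) (H : SimpleGraph β) :
    G.boxProd H ≤ strongProd G H := by
  rintro a b (⟨hG, h⟩ | ⟨hH, h⟩)
  · exact Or.inr (Or.inl ⟨h, hG⟩)
  · exact Or.inl ⟨h, hH⟩

lemma strongProd_le_lexProd (G : SimpleGraph α) (H : SimpleGraph β) :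
    strongProd G H ≤ lexProd G H := by
  rintro a b (h | ⟨-, h⟩ | ⟨h, -⟩)
  · exact Or.inr h
  · exact Or.inl h
  · exact Or.inl h

variable {G : SimpleGraph α} {H : SimpleGraph β}

lemma lexProd_adj {x y : α × β} :
    (lexProd G H).Adj x y ↔ G.Adj x.1 y.1 ∨ (x.1 = y.1 ∧ H.Adj x.2 y.2) :=
  Iff.rfl

lemma exists_forall_fst_eq_of_connected_induce_lexProd {B : Set (α × β)}
    (hB : ((lexProd G H).induce B).Connected) (hind : ∀ x ∈ B, ∀ y ∈ B, ¬G.Adj x.1 y.1) :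
    ∃ o, ∀ x ∈ B, x.1 = o := by
  obtain ⟨⟨x₀, hx₀⟩⟩ := hB.nonempty
  refine ⟨x₀.1, fun x hx => (hB.preconnected ⟨x, hx⟩ ⟨x₀, hx₀⟩).apply_eq_of_forall_adj
    (f := fun z => z.1.1) fun u v huv => ?_⟩
  rcases huv with h | ⟨h, -⟩
  · exact absurd h (hind _ u.2 _ v.2)
  · exact h

lemma connected_induce_of_connected_induce_lexProd {B : Set (α × β)}
    (hB : ((lexProd G H).induce B).Connected) {o : α} (ho : ∀ x ∈ B, x.1 = o) :
    (H.induce {t | (o, t) ∈ B}).Connected := by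
  have hmem (x : B) : (o, x.1.2) ∈ B := by
    rw [← ho x.1 x.2]
    exact x.2
  let f : (lexProd G H).induce B →g H.induce {t | (o, t) ∈ B} :=
    { toFun := fun x => ⟨x.1.2, hmem x⟩
      map_rel' := fun {x y} hxy => by
        rcases hxy with h | ⟨-, h⟩
        · have h' : G.Adj x.1.1 y.1.1 := h
          rw [ho _ x.2, ho _ y.2] at h'
          exact absurd h' G.irrefl
        · exact h }
  exact hB.map f fun t => ⟨⟨(o, t.1), t.2⟩, rfl⟩

end Products

theorem SimpleGraph.IsTree.card_add_one_le_of_lexProd_model {ι α V : Type*} {Q : SimpleGraph ι}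
    {G : SimpleGraph α} {T : SimpleGraph V} (hT : T.IsTree) {B : ι → Set (α × V)}
    (hconn : ∀ i, ((lexProd G T).induce (B i)).Connected)
    (hdisj : Pairwise fun i j => Disjoint (B i) (B j))
    (hadj : ∀ ⦃i j⦄, Q.Adj i j → ∃ a ∈ B i, ∃ b ∈ B j, (lexProd G T).Adj a b)
    {o : α} {A : Finset ι} (hA : A.Nonempty) (hAo : ∀ i ∈ A, ∀ x ∈ B i, x.1 = o)
    {P : Finset (ι × ι)} (hPA : ∀ p ∈ P, p.1 ∈ A ∧ p.2 ∈ A) (hswap : ∀ p ∈ P, p.swap ∉ P)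
    (hP : ∀ p ∈ P, Q.Adj p.1 p.2) :
    #P + 1 ≤ #A := by
  refine hT.card_add_one_le_of_pairwiseDisjoint (C := fun i => {t | (o, t) ∈ B i}) hA
    (fun i _ j _ hij => Set.disjoint_left.2 fun t h₁ h₂ => Set.disjoint_left.1 (hdisj hij) h₁ h₂)
    (fun i hi => connected_induce_of_connected_induce_lexProd (hconn i) (hAo i hi)) hPA hswap
    fun p hp => ?_
  obtain ⟨a, ha, b, hb, hab⟩ := hadj (hP p hp)
  have ha₁ := hAo _ (hPA p hp).1 a ha
  have hb₁ := hAo _ (hPA p hp).2 b hb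
  rcases lexProd_adj.1 hab with hab | ⟨-, hab⟩
  · rw [ha₁, hb₁] at hab
    exact absurd hab G.irrefl
  · exact ⟨a.2, by simpa [← ha₁] using ha, b.2, by simpa [← hb₁] using hb, hab⟩

lemma starGraph_not_adj {m : ℕ} {a b : Option (Fin m)} (ha : a ≠ none) (hb : b ≠ none) :
    ¬(_root_.starGraph m).Adj a b := by
  simp [_root_.starGraph, ha, hb]

lemma lexProd_starGraph_adj {m : ℕ} {β : Type*} {H : SimpleGraph β}
    {x y : Option (Fin m) × β} (h : (lexProd (_root_.starGraph m) H).Adj x y) (hx : x.1 ≠ none)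
    (hy : y.1 ≠ none) : x.1 = y.1 ∧ H.Adj x.2 y.2 :=
  (lexProd_adj.1 h).resolve_left (starGraph_not_adj hx hy)

section Grid

def gridOrientedEdges (k : ℕ) : Finset ((Fin k × Fin k) × (Fin k × Fin k)) :=
  {p | (p.1.1 = p.2.1 ∧ p.1.2.val + 1 = p.2.2.val) ∨ (p.1.2 = p.2.2 ∧ p.1.1.val + 1 = p.2.1.val)}

variable {k : ℕ}

lemma gridGraph_adj_of_mem_gridOrientedEdges {p : (Fin k × Fin k) × (Fin k × Fin k)}
    (hp : p ∈ gridOrientedEdges k) : (gridGraph k).Adj p.1 p.2 := by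
  obtain ⟨⟨a, b⟩, c, d⟩ := p
  simp only [gridOrientedEdges, gridGraph, mem_filter, mem_univ, true_and,
    SimpleGraph.fromRel_adj, ne_eq, Prod.ext_iff, Fin.ext_iff] at hp ⊢
  omega

lemma swap_notMem_gridOrientedEdges {p : (Fin k × Fin k) × (Fin k × Fin k)}
    (hp : p ∈ gridOrientedEdges k) : p.swap ∉ gridOrientedEdges k := by
  obtain ⟨⟨a, b⟩, c, d⟩ := p
  simp only [gridOrientedEdges, mem_filter, mem_univ, true_and, Prod.swap, Fin.ext_iff] at hp ⊢
  omega

lemma eq_of_mem_gridOrientedEdges {p q : (Fin k × Fin k) × (Fin k × Fin k)}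
    (hp : p ∈ gridOrientedEdges k) (hq : q ∈ gridOrientedEdges k) (hpq : p.1 = q.1 ∨ p.2 = q.2)
    (hdir : p.1.1 = p.2.1 ↔ q.1.1 = q.2.1) : p = q := by
  obtain ⟨⟨a, b⟩, c, d⟩ := p
  obtain ⟨⟨a', b'⟩, c', d'⟩ := q
  simp only [gridOrientedEdges, mem_filter, mem_univ, true_and, Prod.ext_iff,
    Fin.ext_iff] at hp hq hpq hdir ⊢
  omega

lemma two_mul_le_card_gridOrientedEdges (k : ℕ) :
    2 * (k * (k - 1)) ≤ #(gridOrientedEdges k) := by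
  obtain _ | k := k
  · simp
  let f : Bool × Fin (k + 1) × Fin k → (Fin (k + 1) × Fin (k + 1)) × (Fin (k + 1) × Fin (k + 1)) :=
    fun x => if x.1 then ((x.2.1, x.2.2.castSucc), (x.2.1, x.2.2.succ))
      else ((x.2.2.castSucc, x.2.1), (x.2.2.succ, x.2.1))
  have hmaps : ∀ x ∈ (univ : Finset _), f x ∈ gridOrientedEdges (k + 1) := by
    rintro ⟨_ | _, i, j⟩ - <;> simp [f, gridOrientedEdges]
  have hinj : Set.InjOn f ↑(univ : Finset (Bool × Fin (k + 1) × Fin k)) := by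
    rintro ⟨_ | _, i, j⟩ - ⟨_ | _, i', j'⟩ - h <;>
      simp [f, Prod.ext_iff, Fin.ext_iff] at h ⊢ <;> omega
  simpa using card_le_card_of_injOn f hmaps hinj

lemma card_filter_gridOrientedEdges_le (S : Finset (Fin k × Fin k)) :
    #{p ∈ gridOrientedEdges k | p.1 ∈ S ∨ p.2 ∈ S} ≤ 4 * #S := by
  have hend (g : (Fin k × Fin k) × (Fin k × Fin k) → Fin k × Fin k)
      (hg : g = Prod.fst ∨ g = Prod.snd) : #{p ∈ gridOrientedEdges k | g p ∈ S} ≤ 2 * #S := by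
    have hmaps : ∀ p ∈ {p ∈ gridOrientedEdges k | g p ∈ S},
        (g p, decide (p.1.1 = p.2.1)) ∈ S ×ˢ (univ : Finset Bool) := by
      intro p hp
      exact mem_product.2 ⟨(mem_filter.1 hp).2, mem_univ _⟩
    have hinj : Set.InjOn (fun p => (g p, decide (p.1.1 = p.2.1)))
        ↑({p ∈ gridOrientedEdges k | g p ∈ S} : Finset _) := by
      intro p hp q hq hpq
      simp only [Prod.mk.injEq, decide_eq_decide] at hpq
      exact eq_of_mem_gridOrientedEdges (mem_filter.1 hp).1 (mem_filter.1 hq).1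
        (by rcases hg with rfl | rfl <;> simp [hpq.1]) hpq.2
    simpa [mul_comm] using card_le_card_of_injOn _ hmaps hinj
  calc #{p ∈ gridOrientedEdges k | p.1 ∈ S ∨ p.2 ∈ S}
      ≤ #{p ∈ gridOrientedEdges k | p.1 ∈ S} + #{p ∈ gridOrientedEdges k | p.2 ∈ S} := by
        rw [filter_or]
        exact card_union_le _ _
    _ ≤ 2 * #S + 2 * #S := add_le_add (hend _ (Or.inl rfl)) (hend _ (Or.inr rfl))
    _ = 4 * #S := by ring

theorem sub_one_sq_le_of_forall_card_add_one_le {ι : Type*} [DecidableEq ι] {k : ℕ}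
    (S : Finset (Fin k × Fin k)) (f : Fin k × Fin k → ι)
    (hfib : ∀ o ∈ Sᶜ.image f,
      #{p ∈ gridOrientedEdges k | p.1 ∉ S ∧ p.2 ∉ S ∧ f p.1 = o} + 1 ≤ #{v ∈ Sᶜ | f v = o}) :
    (k - 1) ^ 2 ≤ 3 * #S := by
  set E := gridOrientedEdges k
  set F := Sᶜ.image f
  have hsplit : #{p ∈ E | p.1 ∈ S ∨ p.2 ∈ S} + #{p ∈ E | p.1 ∉ S ∧ p.2 ∉ S} = #E := by
    simpa only [not_or] using card_filter_add_card_filter_not (s := E) (fun p => p.1 ∈ S ∨ p.2 ∈ S)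
  have hinner : #{p ∈ E | p.1 ∉ S ∧ p.2 ∉ S} + #F ≤ #Sᶜ := by
    rw [card_eq_sum_card_fiberwise (f := fun p => f p.1) (t := F) fun p hp =>
        mem_image_of_mem f (mem_compl.2 (mem_filter.1 hp).2.1),
      card_eq_sum_card_fiberwise (f := f) (t := F) fun v hv => mem_image_of_mem f hv,
      card_eq_sum_ones F, ← sum_add_distrib]
    refine sum_le_sum fun o ho => ?_
    simpa only [filter_filter, and_assoc] using hfib o ho
  have hcompl : #Sᶜ + #S = k * k := by
    rw [card_compl_add_card, Fintype.card_prod, Fintype.card_fin]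
  have hE := two_mul_le_card_gridOrientedEdges k
  have hES := card_filter_gridOrientedEdges_le S
  rcases F.eq_empty_or_nonempty with hF | hF
  · rw [image_eq_empty, ← card_eq_zero] at hF
    have : (k - 1) ^ 2 ≤ k * k := by
      rw [sq]
      exact Nat.mul_le_mul (Nat.sub_le _ _) (Nat.sub_le _ _)
    omega
  · have := hF.card_pos
    obtain _ | k := k
    · simp
    simp only [Nat.add_sub_cancel] at hE ⊢
    nlinarith

end Grid

theorem sub_one_sq_le_of_gridGraph_isMinorOf_lexProd {m n k : ℕ} {T : SimpleGraph (Fin n)}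
    (hT : T.IsTree) (h : (gridGraph k).IsMinorOf (lexProd (_root_.starGraph m) T)) :
    (k - 1) ^ 2 ≤ 3 * n := by
  classical
  obtain ⟨B, hconn, hdisj, hadj⟩ := h
  let S : Finset (Fin k × Fin k) := {v | ∃ t, (none, t) ∈ B v}
  have hS : #S ≤ n := by simpa using card_filter_exists_mem_le hdisj (Prod.mk none)
  have hleaf (v) (hv : v ∉ S) (x) (hx : x ∈ B v) : x.1 ≠ none := fun hx₁ =>
    hv (mem_filter.2 ⟨mem_univ _, x.2, by rwa [← hx₁]⟩)
  have hfibre (v : Fin k × Fin k) : ∃ o, v ∉ S → ∀ x ∈ B v, x.1 = o := by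
    by_cases hv : v ∈ S
    · exact ⟨none, fun h => absurd hv h⟩
    · obtain ⟨o, ho⟩ := exists_forall_fst_eq_of_connected_induce_lexProd (hconn v)
        fun x hx y hy => starGraph_not_adj (hleaf v hv x hx) (hleaf v hv y hy)
      exact ⟨o, fun _ => ho⟩
  choose f hf using hfibre
  have hf_eq (p) (hp : p ∈ gridOrientedEdges k) (h₁ : p.1 ∉ S) (h₂ : p.2 ∉ S) : f p.2 = f p.1 := by
    obtain ⟨a, ha, b, hb, hab⟩ := hadj (gridGraph_adj_of_mem_gridOrientedEdges hp)
    rw [← hf _ h₁ a ha, ← hf _ h₂ b hb]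
    exact (lexProd_starGraph_adj hab (hleaf _ h₁ a ha) (hleaf _ h₂ b hb)).1.symm
  refine le_trans (sub_one_sq_le_of_forall_card_add_one_le S f fun o ho => ?_) (by omega)
  obtain ⟨v₀, hv₀, rfl⟩ := mem_image.1 ho
  refine hT.card_add_one_le_of_lexProd_model hconn hdisj hadj (A := {v ∈ Sᶜ | f v = f v₀})
    ⟨v₀, mem_filter.2 ⟨hv₀, rfl⟩⟩
    (fun v hv => (mem_filter.1 hv).2 ▸ hf v (mem_compl.1 (mem_filter.1 hv).1)) (fun p hp => ?_)
    (fun p hp hswap => swap_notMem_gridOrientedEdges (mem_filter.1 hp).1 (mem_filter.1 hswap).1)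
    fun p hp => gridGraph_adj_of_mem_gridOrientedEdges (mem_filter.1 hp).1
  obtain ⟨hpE, h₁, h₂, hfp⟩ := mem_filter.1 hp
  exact ⟨mem_filter.2 ⟨mem_compl.2 h₁, hfp⟩,
    mem_filter.2 ⟨mem_compl.2 h₂, (hf_eq p hpE h₁ h₂).trans hfp⟩⟩

lemma gridGraph_zero_isMinorOf {β : Type*} (H : SimpleGraph β) : (gridGraph 0).IsMinorOf H :=
  ⟨fun _ => ∅, fun v => v.1.elim0, fun v => v.1.elim0, fun v => v.1.elim0⟩

lemma gridMinorNum_mono {V : Type*} {H H' : SimpleGraph V} (hle : H ≤ H')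
    (hbdd : BddAbove {k | (gridGraph k).IsMinorOf H'}) : gridMinorNum H ≤ gridMinorNum H' :=
  csSup_le_csSup hbdd ⟨0, gridGraph_zero_isMinorOf H⟩ fun _ hk => hk.mono hle

lemma bddAbove_of_forall_sub_one_sq_le {s : Set ℕ} {N : ℕ} (h : ∀ k ∈ s, (k - 1) ^ 2 ≤ N) :
    BddAbove s :=
  ⟨N + 1, fun k hk => by
    have := Nat.le_self_pow two_ne_zero (k - 1)
    have := h k hk
    omega⟩

lemma cast_lt_sqrt_add_one_of_sub_one_sq_le {g N : ℕ} (h : (g - 1) ^ 2 ≤ N) :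
    (g : ℝ) < √(N + 1) + 1 := by
  have hsqrt : ((g - 1 : ℕ) : ℝ) < √(N + 1) := by
    rw [Real.lt_sqrt (Nat.cast_nonneg _)]
    exact_mod_cast Nat.lt_succ_of_le h
  have : (g : ℝ) ≤ ((g - 1 : ℕ) : ℝ) + 1 := by exact_mod_cast (by omega : g ≤ g - 1 + 1)
  linarith

/-- For any star `S` and any tree `T` on `n` vertices,
`gm(S □ T) ≤ gm(S ⊠ T) ≤ gm(S · T) < √(3n+1) + 1`. -/
theorem stmt12 (m n : ℕ) (T : SimpleGraph (Fin n)) (hT : T.IsTree) :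
    gridMinorNum ((_root_.starGraph m).boxProd T) ≤ gridMinorNum (strongProd (_root_.starGraph m) T) ∧
    gridMinorNum (strongProd (_root_.starGraph m) T) ≤ gridMinorNum (lexProd (_root_.starGraph m) T) ∧
    (gridMinorNum (lexProd (_root_.starGraph m) T) : ℝ) < Real.sqrt (3 * n + 1) + 1 := by
  have hbound : ∀ k ∈ {k | (gridGraph k).IsMinorOf (lexProd (_root_.starGraph m) T)},
      (k - 1) ^ 2 ≤ 3 * n :=
    fun _ hk => sub_one_sq_le_of_gridGraph_isMinorOf_lexProd hT hk
  have hbdd := bddAbove_of_forall_sub_one_sq_le hbound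
  refine ⟨gridMinorNum_mono (boxProd_le_strongProd _ _)
      (hbdd.mono fun _ hk => hk.mono (strongProd_le_lexProd _ _)),
    gridMinorNum_mono (strongProd_le_lexProd _ _) hbdd, ?_⟩
  have := hbound _ (Nat.sSup_mem ⟨0, gridGraph_zero_isMinorOf _⟩ hbdd)
  exact_mod_cast cast_lt_sqrt_add_one_of_sub_one_sq_le this
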